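/- Let h:G→P be a skew fibration from a graph G into a combinatorial proposition P. If the image h(G) (the subgraph of P induced by h(V(G)), with inherited labels) is true, then P is true. -/

import Mathlib

/- Combinatorial proofs (Hughes, "Proofs Without Syntax"): common definitions. -/

namespace CombinatorialProofs

/-- An atom: a literal (a variable `p` or its negation `p̄`) or a constant (`1` or `0`). -/
inductive Atom (ν : Type) : Type where
  | pos : ν → Atom ν
  | neg : ν → Atom ν
  | tru : Atom ν
  | fls : Atom ν

/-- The dual of an atom. -/
def Atom.dual {ν : Type} : Atom ν → Atom ν
  | .pos p => .neg p
  | .neg p => .pos p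
  | .tru   => .fls
  | .fls   => .tru

/-- Two atoms are dual literals. -/
def DualLiterals {ν : Type} (a b : Atom ν) : Prop :=
  ∃ p : ν, (a = .pos p ∧ b = .neg p) ∨ (a = .neg p ∧ b = .pos p)

/-- An `𝒜`-labelled graph: a simple graph together with an atom labelling each vertex. -/
structure LabGraph (ν : Type) : Type 1 where
  V : Type
  G : SimpleGraph V
  label : V → Atom ν

/-- The disjoint union `G₁ ∨ G₂` of two graphs (on the sum of the vertex types). -/
def sumUnion {V₁ V₂ : Type} (G₁ : SimpleGraph V₁) (G₂ : SimpleGraph V₂) :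
    SimpleGraph (V₁ ⊕ V₂) where
  Adj v w :=
    match v, w with
    | .inl a, .inl b => G₁.Adj a b
    | .inr a, .inr b => G₂.Adj a b
    | _, _ => False
  symm := by constructor; rintro (a | a) (b | b) h <;> first | exact h.symm | exact h.elim
  loopless := by constructor; rintro (a | a) h <;> exact SimpleGraph.irrefl _ h

/-- The join `G₁ ∧ G₂` of two graphs: disjoint union plus all edges in between. -/
def sumJoin {V₁ V₂ : Type} (G₁ : SimpleGraph V₁) (G₂ : SimpleGraph V₂) :
    SimpleGraph (V₁ ⊕ V₂) where
  Adj v w :=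
    match v, w with
    | .inl a, .inl b => G₁.Adj a b
    | .inr a, .inr b => G₂.Adj a b
    | _, _ => True
  symm := by constructor; rintro (a | a) (b | b) h <;> first | exact h.symm | trivial
  loopless := by constructor; rintro (a | a) h <;> exact SimpleGraph.irrefl _ h

/-- `¬G`: complement the edge set and dualise every label. -/
def LabGraph.neg {ν : Type} (A : LabGraph ν) : LabGraph ν :=
  ⟨A.V, A.Gᶜ, fun v => (A.label v).dual⟩

/-- Union of labelled graphs. -/
def LabGraph.union {ν : Type} (A B : LabGraph ν) : LabGraph ν :=
  ⟨A.V ⊕ B.V, sumUnion A.G B.G, Sum.elim A.label B.label⟩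

/-- Join of labelled graphs. -/
def LabGraph.join {ν : Type} (A B : LabGraph ν) : LabGraph ν :=
  ⟨A.V ⊕ B.V, sumJoin A.G B.G, Sum.elim A.label B.label⟩

/-- A single vertex labelled by the atom `a`. -/
def LabGraph.ofAtom {ν : Type} (a : Atom ν) : LabGraph ν :=
  ⟨PUnit, ⊥, fun _ => a⟩

/-- Propositions, generated freely from variables by `∧`, `∨`, `⇒`, `¬`, `1`, `0`. -/
inductive Form (ν : Type) : Type where
  | var : ν → Form ν
  | tru : Form ν
  | fls : Form ν
  | not : Form ν → Form ν
  | and : Form ν → Form ν → Form ν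
  | or  : Form ν → Form ν → Form ν
  | imp : Form ν → Form ν → Form ν

/-- The boolean value of a proposition under a valuation, with
`f̂(φ ⇒ ρ) = f̂((¬φ) ∨ ρ)`. -/
def Form.eval {ν : Type} (f : ν → Bool) : Form ν → Bool
  | .var p   => f p
  | .tru     => true
  | .fls     => false
  | .not φ   => !(φ.eval f)
  | .and φ ρ => φ.eval f && ρ.eval f
  | .or φ ρ  => φ.eval f || ρ.eval f
  | .imp φ ρ => !(φ.eval f) || ρ.eval f

/-- A proposition is true if it evaluates to `1` under every valuation. -/
def Form.Valid {ν : Type} (φ : Form ν) : Prop :=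
  ∀ f : ν → Bool, φ.eval f = true

/-- The labelled graph `G(φ)` of a proposition `φ`, with `∨` as union, `∧` as join,
`¬` as the labelled-graph negation, and `G ⇒ G' = (¬G) ∨ G'`. -/
def Form.graph {ν : Type} : Form ν → LabGraph ν
  | .var p   => .ofAtom (.pos p)
  | .tru     => .ofAtom .tru
  | .fls     => .ofAtom .fls
  | .not φ   => φ.graph.neg
  | .and φ ρ => φ.graph.join ρ.graph
  | .or φ ρ  => φ.graph.union ρ.graph
  | .imp φ ρ => φ.graph.neg.union ρ.graph

/-- A set of vertices is stable if no two of its elements are joined by an edge. -/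
def IsStable {V : Type} (G : SimpleGraph V) (W : Set V) : Prop :=
  ∀ v ∈ W, ∀ w ∈ W, ¬ G.Adj v w

/-- A clause of the subgraph of `G` induced by `S`: a subset of `S` that is stable and
maximal among stable subsets of `S`. -/
def IsClauseOn {V : Type} (G : SimpleGraph V) (S W : Set V) : Prop :=
  W ⊆ S ∧ IsStable G W ∧ ∀ W' : Set V, W' ⊆ S → IsStable G W' → W ⊆ W' → W' = W

/-- A clause: a maximal stable set. -/
def IsClause {V : Type} (G : SimpleGraph V) (W : Set V) : Prop :=
  IsClauseOn G Set.univ W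

/-- A clause (set of vertices) of an `𝒜`-labelled graph is true if it contains a
`1`-labelled vertex or two vertices labelled by dual literals. -/
def ClauseTrue {ν V : Type} (label : V → Atom ν) (W : Set V) : Prop :=
  (∃ v ∈ W, label v = Atom.tru) ∨
  (∃ v ∈ W, ∃ w ∈ W, DualLiterals (label v) (label w))

/-- An `𝒜`-labelled graph is true if all of its clauses are true. -/
def LabGraph.IsTrue {ν : Type} (A : LabGraph ν) : Prop :=
  ∀ W : Set A.V, IsClause A.G W → ClauseTrue A.label W

/-- A cograph: a non-empty graph with no induced path on four vertices. -/
def IsCograph {V : Type} (G : SimpleGraph V) : Prop :=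
  Nonempty V ∧
  ∀ v w x y : V, v ≠ w → v ≠ x → v ≠ y → w ≠ x → w ≠ y → x ≠ y →
    ¬ (G.Adj v w ∧ G.Adj w x ∧ G.Adj x y ∧ ¬ G.Adj v x ∧ ¬ G.Adj w y ∧ ¬ G.Adj v y)

/-- A graph homomorphism: a function on vertices preserving adjacency. -/
def IsGraphHom {V V' : Type} (G : SimpleGraph V) (G' : SimpleGraph V') (h : V → V') : Prop :=
  ∀ v w : V, G.Adj v w → G'.Adj (h v) (h w)

/-- A skew fibration: a graph homomorphism such that for every vertex `v` of `G` and every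
edge `h(v)w` of `G'` there is an edge `v w̃` of `G` with `h(w̃)w` not an edge of `G'`. -/
def IsSkewFib {V V' : Type} (G : SimpleGraph V) (G' : SimpleGraph V') (h : V → V') : Prop :=
  IsGraphHom G G' h ∧
  ∀ (v : V) (w : V'), G'.Adj (h v) w → ∃ u : V, G.Adj v u ∧ ¬ G'.Adj (h u) w

/-- A colouring of a graph: an equivalence relation relating only non-adjacent vertices. -/
def IsColouring {V : Type} (G : SimpleGraph V) (sim : V → V → Prop) : Prop :=
  Equivalence sim ∧ ∀ v w : V, sim v w → ¬ G.Adj v w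

/-- The colour class of a vertex. -/
def ColourClass {V : Type} (sim : V → V → Prop) (v : V) : Set V := {w | sim v w}

/-- A set `W` of vertices induces a matching if it is non-empty and every `w ∈ W` has a
unique `w' ∈ W` with `w w'` an edge. -/
def InducesMatching {V : Type} (G : SimpleGraph V) (W : Set V) : Prop :=
  W.Nonempty ∧ ∀ w ∈ W, ∃! w' : V, w' ∈ W ∧ G.Adj w w'

/-- A nice colouring: every colour class has at most two vertices, and no union of
two-vertex colour classes induces a matching. -/
def IsNiceColouring {V : Type} (G : SimpleGraph V) (sim : V → V → Prop) : Prop :=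
  IsColouring G sim ∧
  (∀ v : V, ∀ a ∈ ColourClass sim v, ∀ b ∈ ColourClass sim v, ∀ c ∈ ColourClass sim v,
      a = b ∨ a = c ∨ b = c) ∧
  (∀ W : Set V,
    (∀ v ∈ W, ColourClass sim v ⊆ W ∧ ∃ w : V, w ≠ v ∧ sim v w) →
    ¬ InducesMatching G W)

/-- A colour class is axiomatic (w.r.t. a map `h` into an `𝒜`-labelled graph) if it is a
single vertex `v` with `h(v)` labelled `1`, or a pair `{v,w}` with `h(v)`, `h(w)` labelled
by dual literals. -/
def AxiomaticClass {ν V V' : Type} (label : V' → Atom ν) (h : V → V') (K : Set V) : Prop :=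
  (∃ v : V, K = {v} ∧ label (h v) = Atom.tru) ∨
  (∃ v w : V, v ≠ w ∧ K = {v, w} ∧ DualLiterals (label (h v)) (label (h w)))

/-- A combinatorial proof of an `𝒜`-labelled graph `P`: a skew fibration `h : C → P` from a
nicely coloured cograph `C` all of whose colour classes are axiomatic. -/
def IsCombProof {ν V : Type} (C : SimpleGraph V) (sim : V → V → Prop)
    (P : LabGraph ν) (h : V → P.V) : Prop :=
  IsCograph C ∧ IsNiceColouring C sim ∧ IsSkewFib C P.G h ∧
  ∀ v : V, AxiomaticClass P.label h (ColourClass sim v)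

/-- `A` is a portion of the subgraph of `G` induced by `S`: `A ⊆ S` and no edge of `G`
joins `A` to `S \ A` (so that the induced subgraph on `S` is the union of those on `A`
and `S \ A`). -/
def IsPortionOn {V : Type} (G : SimpleGraph V) (S A : Set V) : Prop :=
  A ⊆ S ∧ ∀ a ∈ A, ∀ b ∈ S, b ∉ A → ¬ G.Adj a b

/-- The fusion of `G₁` and `G₂` along portions `A` of `G₁` and `B` of `G₂`: the union
`G₁ ∨ G₂` with all edges between `A` and `B` added. -/
def fusion {V₁ V₂ : Type} (G₁ : SimpleGraph V₁) (G₂ : SimpleGraph V₂)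
    (A : Set V₁) (B : Set V₂) : SimpleGraph (V₁ ⊕ V₂) where
  Adj v w :=
    match v, w with
    | .inl a, .inl b => G₁.Adj a b
    | .inr a, .inr b => G₂.Adj a b
    | .inl a, .inr b => a ∈ A ∧ b ∈ B
    | .inr b, .inl a => a ∈ A ∧ b ∈ B
  symm := by constructor; rintro (a | a) (b | b) h <;> first | exact h.symm | exact h
  loopless := by constructor; rintro (a | a) h <;> exact SimpleGraph.irrefl _ h

/-- The inherited colouring on a disjoint union (or fusion): vertices in different parts
are never related. -/
def simSum {V₁ V₂ : Type} (s₁ : V₁ → V₁ → Prop) (s₂ : V₂ → V₂ → Prop) :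
    V₁ ⊕ V₂ → V₁ ⊕ V₂ → Prop
  | .inl a, .inl b => s₁ a b
  | .inr a, .inr b => s₂ a b
  | _, _ => False

/-- The set `S` cannot be split into two non-empty parts with no edges in between;
i.e. the subgraph induced by `S` is connected (not a union of two non-empty graphs). -/
def NoSplit {V : Type} (G : SimpleGraph V) (S : Set V) : Prop :=
  ∀ A B : Set V, A ∪ B = S → Disjoint A B →
    (∀ a ∈ A, ∀ b ∈ B, ¬ G.Adj a b) → A = ∅ ∨ B = ∅

/-- A component: a maximal non-empty connected (induced) subgraph. -/
def IsComponent {V : Type} (G : SimpleGraph V) (S : Set V) : Prop :=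
  S.Nonempty ∧ NoSplit G S ∧ ∀ T : Set V, S ⊆ T → T.Nonempty → NoSplit G T → T = S

/-- A graph homomorphism is shallow if the preimage of every component has at most one
component (i.e. the preimage induces a connected, possibly empty, subgraph). -/
def IsShallow {V V' : Type} (G : SimpleGraph V) (H : SimpleGraph V') (h : V → V') : Prop :=
  ∀ K : Set V', IsComponent H K → NoSplit G (h ⁻¹' K)

/-- The disjoint union of `n` label-preserving isomorphic copies of a labelled graph. -/
def LabGraph.copies {ν : Type} (P : LabGraph ν) (n : ℕ) : LabGraph ν where
  V := P.V × Fin n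
  G := { Adj := fun a b => a.2 = b.2 ∧ P.G.Adj a.1 b.1
         symm := ⟨fun _ _ h => ⟨h.1.symm, h.2.symm⟩⟩
         loopless := ⟨fun a h => SimpleGraph.irrefl _ h.2⟩ }
  label := fun a => P.label a.1

end CombinatorialProofs
namespace CombinatorialProofs

/-- Key lemma: if `h v ∉ W` for a maximal stable set `W`, then some element of
`W ∩ range h` is adjacent to `h v`. -/
lemma skewfib_adj_aux {ν : Type} {U : Type} (G : SimpleGraph U)
    (P : LabGraph ν) [Fintype P.V] (hP : IsCograph P.G)
    (h : U → P.V) (hsf : IsSkewFib G P.G h)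
    (W : Set P.V) (hst : IsStable P.G W)
    (hmax : ∀ W' : Set P.V, IsStable P.G W' → W ⊆ W' → W' = W) :
    ∀ v : U, h v ∉ W → ∃ y ∈ W, y ∈ Set.range h ∧ P.G.Adj (h v) y := by
  have hne : ∀ v : U, h v ∉ W → ∃ w ∈ W, P.G.Adj (h v) w := by
    intro v hv
    by_contra hc
    push_neg at hc
    have hst' : IsStable P.G (insert (h v) W) := by
      intro a ha b hb
      rcases ha with rfl | ha <;> rcases hb with rfl | hb
      · exact SimpleGraph.irrefl _
      · exact hc b hb
      · exact fun hadj => hc a ha hadj.symm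
      · exact hst a ha b hb
    have heq := hmax _ hst' (Set.subset_insert _ _)
    exact hv (heq ▸ Set.mem_insert (h v) W)
  have main : ∀ (n : ℕ) (v : U),
      ({w | w ∈ W ∧ P.G.Adj (h v) w} : Set P.V).ncard ≤ n → h v ∉ W →
      ∃ y ∈ W, y ∈ Set.range h ∧ P.G.Adj (h v) y := by
    intro n
    induction n with
    | zero =>
      intro v hcard hv
      obtain ⟨w, hwW, hadj⟩ := hne v hv
      have : ({w | w ∈ W ∧ P.G.Adj (h v) w} : Set P.V) = ∅ :=
        Set.ncard_eq_zero (Set.toFinite _) |>.mp (Nat.le_zero.mp hcard)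
      exact absurd (this ▸ (show w ∈ ({w | w ∈ W ∧ P.G.Adj (h v) w} : Set P.V) from ⟨hwW, hadj⟩))
        (Set.notMem_empty w)
    | succ n ih =>
      intro v hcard hv
      obtain ⟨w, hwW, hadj⟩ := hne v hv
      obtain ⟨u, huv, hnadj⟩ := hsf.2 v w hadj
      have hvu : P.G.Adj (h v) (h u) := hsf.1 v u huv
      by_cases hu : h u ∈ W
      · exact ⟨h u, hu, ⟨u, rfl⟩, hvu⟩
      · have hsub : ({w' | w' ∈ W ∧ P.G.Adj (h u) w'} : Set P.V) ⊆
            {w' | w' ∈ W ∧ P.G.Adj (h v) w'} := by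
          rintro w' ⟨hw'W, hw'adj⟩
          refine ⟨hw'W, ?_⟩
          by_contra hnvw'
          have d1 : w' ≠ h u := hw'adj.ne'
          have d2 : w' ≠ h v := fun e => hv (e ▸ hw'W)
          have d3 : w' ≠ w := fun e => hnadj (e ▸ hw'adj)
          have d4 : h u ≠ h v := hvu.ne'
          have d5 : h u ≠ w := fun e => hst w hwW w' hw'W (e ▸ hw'adj)
          have d6 : h v ≠ w := hadj.ne
          exact hP.2 w' (h u) (h v) w d1 d2 d3 d4 d5 d6
            ⟨hw'adj.symm, hvu.symm, hadj, fun a => hnvw' a.symm, hnadj,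
              hst w' hw'W w hwW⟩
        have hssub : ({w' | w' ∈ W ∧ P.G.Adj (h u) w'} : Set P.V) ⊂
            {w' | w' ∈ W ∧ P.G.Adj (h v) w'} :=
          ⟨hsub, fun hc => hnadj (hc ⟨hwW, hadj⟩).2⟩
        have hlt := Set.ncard_lt_ncard hssub (Set.toFinite _)
        obtain ⟨y, hyW, hyr, hyadj⟩ := ih u (by omega) hu
        exact ⟨y, hyW, hyr, (hsub ⟨hyW, hyadj⟩).2⟩
  intro v hv
  exact main _ v le_rfl hv

/-- Let `h : G → P` be a skew fibration into a combinatorial proposition `P`.  If the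
image `h(G)` (the subgraph of `P` induced by `h(V(G))`, with inherited labels) is true,
then `P` is true. -/
theorem true_of_image_true (ν : Type) {U : Type} [Fintype U] (G : SimpleGraph U)
    (P : LabGraph ν) [Fintype P.V] (hP : IsCograph P.G)
    (h : U → P.V) (hsf : IsSkewFib G P.G h)
    (himg : ∀ W : Set P.V, IsClauseOn P.G (Set.range h) W → ClauseTrue P.label W) :
    P.IsTrue := by
  intro W hW
  obtain ⟨-, hst, hmax⟩ := hW
  have hmax' : ∀ W' : Set P.V, IsStable P.G W' → W ⊆ W' → W' = W := fun W' h1 h2 =>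
    hmax W' (Set.subset_univ _) h1 h2
  have key := skewfib_adj_aux G P hP h hsf W hst hmax'
  set W₀ : Set P.V := W ∩ Set.range h with hW₀
  have hclause : IsClauseOn P.G (Set.range h) W₀ := by
    refine ⟨Set.inter_subset_right, fun a ha b hb => hst a ha.1 b hb.1, ?_⟩
    intro W' hW'r hW'st hW'sub
    refine Set.Subset.antisymm (fun x hx => ?_) hW'sub
    obtain ⟨v, rfl⟩ := hW'r hx
    refine ⟨?_, ⟨v, rfl⟩⟩
    by_contra hv
    obtain ⟨y, hyW, hyr, hyadj⟩ := key v hv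
    exact hW'st _ hx _ (hW'sub ⟨hyW, hyr⟩) hyadj
  rcases himg W₀ hclause with ⟨x, hx, hlab⟩ | ⟨x, hx, y, hy, hdl⟩
  · exact Or.inl ⟨x, hx.1, hlab⟩
  · exact Or.inr ⟨x, hx.1, y, hy.1, hdl⟩

end CombinatorialProofs
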